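/- Let α > 1, s0 > 0, and let x : [s0, ∞) → H be a twice continuously differentiable solution of the inertial system with implicit Hessian driven damping ẍ(s) + (α/s)·ẋ(s) + ∇f(x(s) + (s/(α−1))·ẋ(s)) = 0 for all s ≥ s0. Then ∫_{s0}^∞ s³‖∇f(x(s) + (s/(α−1))·ẋ(s))‖² ds < ∞, and ‖∇f(x(s) + (s/(α−1))·ẋ(s))‖ = o(1/s²) as s → ∞, i.e., s²·‖∇f(x(s) + (s/(α−1))·ẋ(s))‖ → 0 as s → ∞. -/

import Mathlib

/-!
With `y s = x s + (s / (α - 1)) • ẋ s` the equation says exactly that `y` is a time-rescaled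
gradient flow, `ẏ s = -(s / (α - 1)) • ∇f (y s)`. For a minimiser `z`, convexity makes the energy
`(α - 1) s² (f (y s) - f z) + (α - 1)² ‖y s - z‖²` decrease at rate at least `s³ ‖∇f (y s)‖²`,
which gives the integral estimate. Monotonicity of `∇f` makes `‖∇f (y s)‖` nonincreasing along the
flow, so `T⁴ ‖∇f (y T)‖²` is bounded by a multiple of the tail integral of `s³ ‖∇f (y s)‖²` over
`[T/2, T]`, which tends to `0`.
-/

open MeasureTheory Filter Set Asymptotics
open scoped Topology RealInnerProductSpace

theorem antitoneOn_of_frequently_slope_lt {φ : ℝ → ℝ} {S : Set ℝ} (hS : S.OrdConnected)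
    (hφ : ContinuousOn φ S) (h : ∀ x ∈ S, ∀ r > 0, ∃ᶠ z in 𝓝[>] x, slope φ x z < r) :
    AntitoneOn φ S := fun a ha _ hb hab =>
  image_le_of_liminf_slope_right_le_deriv_boundary (B := fun _ => φ a) (hφ.mono (hS.out ha hb))
    le_rfl continuousOn_const (fun _ _ => hasDerivWithinAt_const _ _ _)
    (fun x hx => h x (hS.out ha hb (Ico_subset_Icc_self hx))) ⟨hab, le_rfl⟩

theorem integrableOn_Ici_of_hasDerivAt_le_neg {W W' k : ℝ → ℝ} {a : ℝ}
    (hW : ∀ s ∈ Ici a, HasDerivAt W (W' s) s) (hW'k : ∀ s ∈ Ici a, W' s ≤ -k s)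
    (hW0 : ∀ s ∈ Ici a, 0 ≤ W s) (hk : ContinuousOn k (Ici a)) (hk0 : ∀ s ∈ Ici a, 0 ≤ k s) :
    IntegrableOn k (Ici a) := by
  have hkIcc : ∀ T, IntegrableOn k (Icc a T) := fun T =>
    (hk.mono Icc_subset_Ici_self).integrableOn_Icc
  rw [integrableOn_Ici_iff_integrableOn_Ioi]
  refine integrableOn_Ioi_of_intervalIntegral_norm_bounded (W a) a
    (fun T => (hkIcc T).mono_set Ioc_subset_Icc_self) tendsto_id ?_
  filter_upwards [eventually_ge_atTop a] with T hT
  have hIcc : Icc a T ⊆ Ici a := Icc_subset_Ici_self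
  calc ∫ s in a..T, ‖k s‖ = ∫ s in a..T, k s := by
        refine intervalIntegral.integral_congr fun s hs => Real.norm_of_nonneg (hk0 s ?_)
        exact hIcc (uIcc_of_le hT ▸ hs)
    _ ≤ (-W) T - (-W) a :=
        intervalIntegral.integral_le_sub_of_hasDeriv_right_of_le hT
          (fun s hs => (hW s (hIcc hs)).neg.continuousAt.continuousWithinAt)
          (fun s hs => (hW s (hIcc (Ioo_subset_Icc_self hs))).neg.hasDerivWithinAt) (hkIcc T)
          (fun s hs => le_neg.1 (hW'k s (hIcc (Ioo_subset_Icc_self hs))))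
    _ ≤ W a := by simp only [Pi.neg_apply]; linarith [hW0 T hT]

theorem tendsto_pow_succ_mul_of_antitoneOn_of_integrableOn {h : ℝ → ℝ} {a : ℝ} {n : ℕ}
    (hanti : AntitoneOn h (Ici a)) (h0 : ∀ s ∈ Ici a, 0 ≤ h s)
    (hint : IntegrableOn (fun s => s ^ n * h s) (Ici a)) :
    Tendsto (fun s => s ^ (n + 1) * h s) atTop (𝓝 0) := by
  have hii : ∀ b ∈ Ici a, ∀ c ∈ Ici a, IntervalIntegrable (fun s => s ^ n * h s) volume b c :=
    fun b hb c hc => (hint.mono_set (ordConnected_Ici.uIcc_subset hb hc)).intervalIntegrable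
  have hhalf : ∀ᶠ T in atTop, T / 2 ∈ Ici a ∧ T ∈ Ici a ∧ 0 ≤ T := by
    filter_upwards [eventually_ge_atTop (2 * a), eventually_ge_atTop a, eventually_ge_atTop 0]
      with T hT2 hT hT0
    exact ⟨by simp only [mem_Ici]; linarith, hT, hT0⟩
  have htail : Tendsto (fun T => ∫ s in T / 2..T, s ^ n * h s) atTop (𝓝 0) := by
    have hlim := intervalIntegral_tendsto_integral_Ioi a
      (hint.mono_set Ioi_subset_Ici_self) tendsto_id
    have := hlim.sub (hlim.comp (tendsto_id.atTop_div_const two_pos))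
    rw [sub_self] at this
    refine this.congr' ?_
    filter_upwards [hhalf] with T ⟨hT2, hT, hT0⟩
    exact intervalIntegral.integral_interval_sub_left (hii a self_mem_Ici T hT)
      (hii a self_mem_Ici _ hT2)
  have hbound : ∀ᶠ T in atTop,
      T ^ (n + 1) * h T ≤ 2 ^ (n + 1) * ∫ s in T / 2..T, s ^ n * h s := by
    filter_upwards [hhalf] with T ⟨hT2, hT, hT0⟩
    have hmono : ∫ _ in T / 2..T, (T / 2) ^ n * h T ≤ ∫ s in T / 2..T, s ^ n * h s := by
      refine intervalIntegral.integral_mono_on (by linarith) intervalIntegrable_const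
        (hii _ hT2 T hT) fun s hs => ?_
      have hsa : s ∈ Ici a := le_trans hT2 hs.1
      exact mul_le_mul (pow_le_pow_left₀ (by linarith) hs.1 n) (hanti hsa hT hs.2) (h0 T hT)
        (pow_nonneg (by linarith [hs.1]) n)
    rw [intervalIntegral.integral_const, smul_eq_mul] at hmono
    calc T ^ (n + 1) * h T = 2 ^ (n + 1) * ((T - T / 2) * ((T / 2) ^ n * h T)) := by
          rw [show T - T / 2 = T / 2 by ring, div_pow, pow_succ, pow_succ]
          field_simp
      _ ≤ _ := by gcongr
  refine tendsto_of_tendsto_of_tendsto_of_le_of_le' tendsto_const_nhds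
    (by simpa using htail.const_mul (2 ^ (n + 1))) ?_ hbound
  filter_upwards [hhalf] with T ⟨_, hT, hT0⟩
  exact mul_nonneg (pow_nonneg hT0 _) (h0 T hT)

theorem LocallyLipschitz.of_forall_isBounded {E F : Type*} [PseudoMetricSpace E]
    [PseudoEMetricSpace F] {g : E → F}
    (hg : ∀ s : Set E, Bornology.IsBounded s → ∃ K, LipschitzOnWith K g s) :
    LocallyLipschitz g := fun p => by
  obtain ⟨K, hK⟩ := hg _ (Metric.isBounded_closedBall (x := p) (r := 1))
  exact ⟨K, _, Metric.closedBall_mem_nhds p one_pos, hK⟩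

theorem LocallyLipschitz.isBigO_comp_sub {E F : Type*} [NormedAddCommGroup E] [NormedSpace ℝ E]
    [SeminormedAddCommGroup F] {g : E → F} (hg : LocallyLipschitz g) {y : ℝ → E} {y' : E}
    {s : ℝ} (hy : HasDerivAt y y' s) :
    (fun t => g (y t) - g (y s)) =O[𝓝 s] fun t => t - s := by
  obtain ⟨K, U, hU, hK⟩ := hg (y s)
  refine IsBigO.trans ?_ hy.isBigO_sub
  refine IsBigO.of_bound K ?_
  filter_upwards [hy.continuousAt hU] with t ht
  simpa only [← dist_eq_norm] using hK.dist_le_mul _ ht _ (mem_of_mem_nhds hU)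

section InnerProductSpace

variable {H : Type*} [NormedAddCommGroup H] [InnerProductSpace ℝ H]

theorem eventually_slope_norm_sq_comp_lt {F : H → H} (hmono : ∀ p q, 0 ≤ ⟪F p - F q, p - q⟫)
    (hF : LocallyLipschitz F) {y : ℝ → H} {s l : ℝ} (hl : 0 < l)
    (hy : HasDerivAt y (-(l • F (y s))) s) {r : ℝ} (hr : 0 < r) :
    ∀ᶠ t in 𝓝[>] s, slope (fun t => ‖F (y t)‖ ^ 2) s t < r := by
  obtain ⟨L, hL, hLip⟩ := (hF.isBigO_comp_sub hy).exists_pos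
  have hδ : 0 < r * l / (4 * L) := by positivity
  have hrem := (hasDerivAt_iff_isLittleO.1 hy).def hδ
  have hnear : ∀ᶠ t in 𝓝 s, t < s + r / (2 * L ^ 2) :=
    eventually_lt_nhds (by linarith [show 0 < r / (2 * L ^ 2) by positivity])
  filter_upwards [self_mem_nhdsWithin, nhdsWithin_le_nhds (hLip.bound.and (hrem.and hnear))]
    with t (hst : s < t) ⟨hΔ, hρ, ht⟩
  set d := t - s
  set Δ := F (y t) - F (y s)
  set ρ := y t - y s - d • -(l • F (y s))
  have hd : 0 < d := sub_pos.2 hst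
  rw [Real.norm_of_nonneg hd.le] at hΔ hρ
  -- Monotonicity of `F` against the first-order expansion of `y` at `s` makes
  -- `⟪Δ, F (y s)⟫ = o(t - s)`, and the Lipschitz bound makes `‖Δ‖ ^ 2 = O((t - s) ^ 2)`.
  have hy_sub : y t - y s = ρ - (d * l) • F (y s) := by simp [ρ, mul_smul]
  have hinner : d * l * ⟪Δ, F (y s)⟫ ≤ ⟪Δ, ρ⟫ := by
    have := hmono (y t) (y s)
    rw [hy_sub, inner_sub_right, real_inner_smul_right] at this
    linarith
  have hcross : ⟪Δ, F (y s)⟫ ≤ r / 4 * d := by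
    have hCS := (real_inner_le_norm Δ ρ).trans (mul_le_mul hΔ hρ (norm_nonneg _) (by positivity))
    have : L * d * (r * l / (4 * L) * d) = d * l * (r / 4 * d) := by field_simp
    exact le_of_mul_le_mul_left (by linarith) (mul_pos hd hl)
  have hsq : ‖Δ‖ ^ 2 < r / 2 * d := by
    have hLd : L ^ 2 * d < r / 2 := by
      have := (lt_div_iff₀ (by positivity : (0:ℝ) < 2 * L ^ 2)).1 (sub_lt_iff_lt_add'.2 ht)
      linarith
    calc ‖Δ‖ ^ 2 ≤ (L * d) ^ 2 := pow_le_pow_left₀ (norm_nonneg Δ) hΔ 2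
      _ = L ^ 2 * d * d := by ring
      _ < r / 2 * d := mul_lt_mul_of_pos_right hLd hd
  have hexpand : ‖F (y t)‖ ^ 2 = ‖F (y s)‖ ^ 2 + 2 * ⟪Δ, F (y s)⟫ + ‖Δ‖ ^ 2 := by
    rw [real_inner_comm, ← norm_add_sq_real]
    simp [Δ]
  rw [slope_def_field, div_lt_iff₀ hd]
  linarith

theorem antitoneOn_norm_sq_comp_of_hasDerivAt {F : H → H}
    (hmono : ∀ p q, 0 ≤ ⟪F p - F q, p - q⟫) (hF : LocallyLipschitz F) {y : ℝ → H} {l : ℝ → ℝ}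
    {S : Set ℝ} (hS : S.OrdConnected) (hl : ∀ s ∈ S, 0 < l s)
    (hy : ∀ s ∈ S, HasDerivAt y (-(l s • F (y s))) s) :
    AntitoneOn (fun s => ‖F (y s)‖ ^ 2) S :=
  antitoneOn_of_frequently_slope_lt hS
    (fun s hs => ((hF.continuous.continuousAt.comp (hy s hs).continuousAt).norm.pow 2)
      |>.continuousWithinAt)
    (fun s hs _ hr => (eventually_slope_norm_sq_comp_lt hmono hF (hl s hs) (hy s hs) hr).frequently)

theorem hasDerivAt_add_div_smul_of_eq_zero {x x' : ℝ → H} {α s : ℝ} {w g : H}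
    (hα : α ≠ 1) (hs : s ≠ 0) (hx : HasDerivAt x (x' s) s) (hx' : HasDerivAt x' w s)
    (heq : w + (α / s) • x' s + g = 0) :
    HasDerivAt (fun t => x t + (t / (α - 1)) • x' t) (-((s / (α - 1)) • g)) s := by
  have hα' : α - 1 ≠ 0 := sub_ne_zero.2 hα
  refine (hx.add (((hasDerivAt_id s).div_const (α - 1)).smul hx')).congr_deriv ?_
  rw [eq_neg_add_of_add_eq heq]
  match_scalars
  · field_simp
    ring
  · simp

variable [CompleteSpace H]

theorem ConvexOn.add_inner_le_of_hasGradientAt {f : H → ℝ} {g p : H}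
    (hf : ConvexOn ℝ univ f) (hg : HasGradientAt f g p) (q : H) :
    f p + ⟪g, q - p⟫ ≤ f q := by
  have hline : HasDerivAt (f ∘ AffineMap.lineMap (k := ℝ) p q) ⟪g, q - p⟫ 0 := by
    simpa using hg.hasFDerivAt.comp_hasDerivAt_of_eq (0 : ℝ) AffineMap.hasDerivAt_lineMap
      (AffineMap.lineMap_apply_zero p q).symm
  have := (hf.comp_affineMap (AffineMap.lineMap p q)).le_slope_of_hasDerivAt
    (mem_univ 0) (mem_univ 1) one_pos hline
  simp only [slope_def_field, Function.comp_apply, AffineMap.lineMap_apply_one,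
    AffineMap.lineMap_apply_zero, sub_zero, div_one] at this
  linarith

theorem ConvexOn.inner_sub_gradient_nonneg {f : H → ℝ} {f' : H → H}
    (hf : ConvexOn ℝ univ f) (hgrad : ∀ x, HasGradientAt f (f' x) x) (p q : H) :
    0 ≤ ⟪f' p - f' q, p - q⟫ := by
  have hp := hf.add_inner_le_of_hasGradientAt (hgrad p) q
  have hq := hf.add_inner_le_of_hasGradientAt (hgrad q) p
  rw [← neg_sub p q, inner_neg_right] at hp
  rw [inner_sub_left]
  linarith

theorem integrableOn_pow_three_mul_norm_sq_of_hasDerivAt {f : H → ℝ} {f' : H → H}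
    (hconv : ConvexOn ℝ univ f) (hgrad : ∀ x, HasGradientAt f (f' x) x) (hf' : Continuous f')
    (hmin : ∃ z, ∀ y, f z ≤ f y) {y : ℝ → H} {c s0 : ℝ} (hc : 0 < c) (hs0 : 0 ≤ s0)
    (hy : ∀ s ∈ Ici s0, HasDerivAt y (-((s / c) • f' (y s))) s) :
    IntegrableOn (fun s => s ^ 3 * ‖f' (y s)‖ ^ 2) (Ici s0) := by
  obtain ⟨z, hz⟩ := hmin
  have hnonneg : ∀ s ∈ Ici s0, 0 ≤ s := fun s hs => hs0.trans hs
  refine integrableOn_Ici_of_hasDerivAt_le_neg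
    (W := fun s => c * s ^ 2 * (f (y s) - f z) + c ^ 2 * ‖y s - z‖ ^ 2)
    (W' := fun s => 2 * c * s * (f (y s) - f z - ⟪y s - z, f' (y s)⟫) - s ^ 3 * ‖f' (y s)‖ ^ 2)
    (fun s hs => ?_) (fun s hs => ?_) (fun s _ => ?_) ?_ (fun s hs => ?_)
  · have hfy := (hgrad (y s)).hasFDerivAt.comp_hasDerivAt s (hy s hs)
    rw [InnerProductSpace.toDual_apply_apply] at hfy
    refine ((((hasDerivAt_pow 2 s).const_mul c).mul (hfy.sub_const (f z))).add
      (((hy s hs).sub_const z).norm_sq.const_mul (c ^ 2))).congr_deriv ?_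
    simp only [Function.comp_apply, inner_neg_right, real_inner_smul_right,
      real_inner_self_eq_norm_sq]
    field_simp
    ring
  · have hsub := hconv.add_inner_le_of_hasGradientAt (hgrad (y s)) z
    rw [← neg_sub, inner_neg_right, real_inner_comm] at hsub
    have hgap : f (y s) - f z - ⟪y s - z, f' (y s)⟫ ≤ 0 := by linarith
    have := hnonneg s hs
    linarith [mul_nonpos_of_nonneg_of_nonpos (by positivity : 0 ≤ 2 * c * s) hgap]
  · have := hz (y s)
    have : 0 ≤ f (y s) - f z := by linarith
    positivity
  · exact ((continuousOn_pow 3).mul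
      ((hf'.comp_continuousOn fun s hs => (hy s hs).continuousAt.continuousWithinAt).norm.pow 2))
  · have := hnonneg s hs
    positivity

end InnerProductSpace

theorem implicit_hessian_damping_gradient_estimates_general
    {H : Type*} [NormedAddCommGroup H] [InnerProductSpace ℝ H] [CompleteSpace H]
    (f : H → ℝ) (f' : H → H)
    (hconv : ConvexOn ℝ Set.univ f)
    (hgrad : ∀ x, HasGradientAt f (f' x) x)
    (hlip : ∀ s : Set H, Bornology.IsBounded s → ∃ K : NNReal, LipschitzOnWith K f' s)
    (hmin : ∃ z, ∀ y, f z ≤ f y)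
    (α s0 : ℝ) (hα : 1 < α) (hs0 : 0 < s0)
    (x x' x'' : ℝ → H)
    (hx : ∀ s ∈ Ici s0, HasDerivAt x (x' s) s)
    (hx' : ∀ s ∈ Ici s0, HasDerivAt x' (x'' s) s)
    (heq : ∀ s ∈ Ici s0,
      x'' s + (α / s) • x' s + f' (x s + (s / (α - 1)) • x' s) = 0) :
    IntegrableOn (fun s => s ^ 3 * ‖f' (x s + (s / (α - 1)) • x' s)‖ ^ 2) (Ici s0) ∧
    Tendsto (fun s => s ^ 2 * ‖f' (x s + (s / (α - 1)) • x' s)‖) atTop (nhds 0) := by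
  have hc : 0 < α - 1 := sub_pos.2 hα
  have hF : LocallyLipschitz f' := .of_forall_isBounded hlip
  have hflow : ∀ s ∈ Ici s0, HasDerivAt (fun t => x t + (t / (α - 1)) • x' t)
      (-((s / (α - 1)) • f' (x s + (s / (α - 1)) • x' s))) s := fun s hs =>
    hasDerivAt_add_div_smul_of_eq_zero hα.ne' (hs0.trans_le hs).ne' (hx s hs) (hx' s hs) (heq s hs)
  have hint := integrableOn_pow_three_mul_norm_sq_of_hasDerivAt hconv hgrad hF.continuous hmin
    hc hs0.le hflow
  refine ⟨hint, ?_⟩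
  have hanti := antitoneOn_norm_sq_comp_of_hasDerivAt (hconv.inner_sub_gradient_nonneg hgrad) hF
    ordConnected_Ici (fun s hs => div_pos (hs0.trans_le hs) hc) hflow
  have hrate := (tendsto_pow_succ_mul_of_antitoneOn_of_integrableOn hanti
    (fun s _ => sq_nonneg _) hint).sqrt
  rw [Real.sqrt_zero] at hrate
  refine hrate.congr fun s => ?_
  rw [← Real.sqrt_sq (by positivity : 0 ≤ s ^ 2 * ‖f' (x s + (s / (α - 1)) • x' s)‖)]
  congr 1
  ring

/-- Implicit Hessian driven damping: integral estimate and o(1/s²) rate for the gradients. -/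
theorem implicit_hessian_damping_gradient_estimates
    {H : Type*} [NormedAddCommGroup H] [InnerProductSpace ℝ H] [CompleteSpace H]
    (f : H → ℝ) (f' : H → H)
    (hconv : ConvexOn ℝ Set.univ f)
    (hgrad : ∀ x, HasGradientAt f (f' x) x)
    (hlip : ∀ s : Set H, Bornology.IsBounded s → ∃ K : NNReal, LipschitzOnWith K f' s)
    (hmin : ∃ z, ∀ y, f z ≤ f y)
    (α s0 : ℝ) (hα : 1 < α) (hs0 : 0 < s0)
    (x x' x'' : ℝ → H)
    (hx : ∀ s ∈ Ici s0, HasDerivAt x (x' s) s)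
    (hx' : ∀ s ∈ Ici s0, HasDerivAt x' (x'' s) s)
    (hx''cont : ContinuousOn x'' (Ici s0))
    (heq : ∀ s ∈ Ici s0,
      x'' s + (α / s) • x' s + f' (x s + (s / (α - 1)) • x' s) = 0) :
    IntegrableOn (fun s => s ^ 3 * ‖f' (x s + (s / (α - 1)) • x' s)‖ ^ 2) (Ici s0) ∧
    Tendsto (fun s => s ^ 2 * ‖f' (x s + (s / (α - 1)) • x' s)‖) atTop (nhds 0) :=
  implicit_hessian_damping_gradient_estimates_general f f' hconv hgrad hlip hmin α s0 hα hs0 x x'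
    x'' hx hx' heq
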